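/- Let p, q ≥ 1, let G be a split graph with clique C = {c_1,…,c_p} and independent set U = {u_1,…,u_q}, and let G′ be the split reduction graph of G. Then G′ is a split graph whose vertex set is partitioned into the clique D and the independent set W ∪ S (in particular G′ is chordal, i.e. has no induced cycle of length at least four), and there exists a tree whose vertex set is exactly the set of maximal cliques of G′, which satisfies the clique-intersection property, and in which every vertex has degree at most 3. -/

import Mathlib

/-- A graph is chordal if it has no induced cycle of length at least four. -/
def Chordal {V : Type*} (H : SimpleGraph V) : Prop :=
  ∀ m : ℕ, 4 ≤ m → IsEmpty (SimpleGraph.cycleGraph m ↪g H)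

/-- A maximal clique of a graph, as a finset. -/
def IsMaxClique {V : Type*} (H : SimpleGraph V) (K : Finset V) : Prop :=
  H.IsClique (K : Set V) ∧ ∀ K' : Finset V, H.IsClique (K' : Set V) → K ⊆ K' → K' = K

/-- The clique-intersection property for a tree on the maximal cliques of `H`. -/
def CliqueIntersectionProperty {V : Type*} [DecidableEq V] (H : SimpleGraph V)
    (T : SimpleGraph {K : Finset V // IsMaxClique H K}) : Prop :=
  ∀ (K K' : {K : Finset V // IsMaxClique H K}) (p : T.Walk K K'), p.IsPath →
    ∀ L ∈ p.support, K.1 ∩ K'.1 ⊆ L.1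

/-- Vertices of the split reduction graph: the clique `D` (`p` vertices), the
independent set `W` (`q` vertices) and the special vertices `S` (`q` vertices). -/
inductive SVert (p q : ℕ) : Type where
  | d : Fin p → SVert p q
  | w : Fin q → SVert p q
  | s : Fin q → SVert p q
deriving DecidableEq

/-- The split reduction graph `G'` of a split graph `G` on `Fin p ⊕ Fin q`
(`Sum.inl` is the clique `C`, `Sum.inr` the independent set `U`). -/
def splitRed (p q : ℕ) (G : SimpleGraph (Fin p ⊕ Fin q)) : SimpleGraph (SVert p q) :=
  SimpleGraph.fromRel (fun a b =>
    match a, b with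
    | .d i, .d j => i ≠ j
    | .d i, .w j => G.Adj (Sum.inl i) (Sum.inr j)
    | .s _, .d _ => True
    | _, _ => False)

/-- `v` belongs to the clique part `D` of the split reduction graph. -/
def SVert.isD {p q : ℕ} : SVert p q → Prop
  | .d _ => True
  | _ => False

/-!
In `G′` every vertex of `W ∪ S` is simplicial, its neighbourhood lying in the clique `D`, so it
lies in exactly one maximal clique, its closed neighbourhood. Since `D ∪ {s₀}` is a clique, every
maximal clique contains such a vertex, so the maximal cliques are the `N[w_j]` and
`N[s_j] = D ∪ {s_j}`. Arrange them as a comb: a path through the `N[s_j]`, with `N[w_j]` a leaf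
hanging off `N[s_j]`; all degrees are at most 3. Two distinct maximal cliques meet inside `D`,
and every inner node of a path in the comb is some `N[s_j] ⊇ D`, which gives the
clique-intersection property. Chordality holds for any split graph: in a cycle of length at least
four, a vertex set that is a clique with independent complement cannot exist.
-/

open SimpleGraph

section Chordal

lemma SimpleGraph.cycleGraph_adj_add_one {n : ℕ} (x : Fin (n + 2)) :
    (cycleGraph (n + 2)).Adj x (x + 1) := by
  simp [cycleGraph_adj]

lemma SimpleGraph.cycleGraph_not_adj_add_two {n : ℕ} (x : Fin (n + 4)) :
    ¬ (cycleGraph (n + 4)).Adj x (x + 2) := by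
  rw [cycleGraph_adj, sub_add_cancel_left, add_sub_cancel_left, neg_eq_iff_eq_neg]
  simp [Fin.ext_iff, Fin.val_neg, Nat.mod_eq_of_lt (by omega : 2 < n + 4)]

lemma SimpleGraph.cycleGraph_not_isClique_of_isIndepSet_compl {m : ℕ} (hm : 4 ≤ m)
    {A : Set (Fin m)} (hAc : (cycleGraph m).IsIndepSet Aᶜ) : ¬ (cycleGraph m).IsClique A := by
  intro hA
  obtain ⟨n, rfl⟩ : ∃ n, m = n + 4 := ⟨m - 4, by omega⟩
  have cover : ∀ x, x ∈ A ∨ x + 1 ∈ A := by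
    by_contra! ⟨x, hx, hx1⟩
    exact hAc hx hx1 (by simp) (cycleGraph_adj_add_one x)
  have gap : ∀ x ∈ A, x + 2 ∉ A := fun x hx hx2 =>
    cycleGraph_not_adj_add_two x
      (hA hx hx2 (by simp [Fin.ext_iff, Nat.mod_eq_of_lt (by omega : 2 < n + 4)]))
  obtain ⟨a, ha⟩ : ∃ a, a ∈ A := (cover 0).elim (⟨0, ·⟩) (⟨1, ·⟩)
  have ha2 : a + 2 ∉ A := gap a ha
  have ha3 : a + 2 + 1 ∈ A := (cover (a + 2)).resolve_left ha2
  have ha1 : a + 1 ∉ A := fun ha1 => gap _ ha1 (by rwa [add_right_comm])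
  exact (cover (a + 1)).elim ha1 (by rwa [show a + 1 + 1 = a + 2 by abel])

theorem chordal_of_isClique_of_isIndepSet_compl {V : Type*} {H : SimpleGraph V} {A : Set V}
    (hA : H.IsClique A) (hAc : H.IsIndepSet Aᶜ) : Chordal H := by
  refine fun m hm => ⟨fun f => cycleGraph_not_isClique_of_isIndepSet_compl hm
    (A := f ⁻¹' A) ?_ ?_⟩
  · exact fun x hx y hy hxy hadj => hAc hx hy (f.injective.ne hxy) (f.map_adj_iff.mpr hadj)
  · exact fun x hx y hy hxy => f.map_adj_iff.mp (hA hx hy (f.injective.ne hxy))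

end Chordal

section MaxClique

variable {V : Type*} {H : SimpleGraph V} {v : V}

lemma subset_insert_neighborSet_of_isClique {L : Set V} (hL : H.IsClique L)
    (hv : v ∈ L) : L ⊆ insert v (H.neighborSet v) := fun _ hx =>
  or_iff_not_imp_left.mpr fun hxv => hL hv hx (Ne.symm hxv)

lemma isMaxClique_insert_neighborFinset [DecidableEq V] [Fintype (H.neighborSet v)]
    (hN : H.IsClique (H.neighborSet v)) : IsMaxClique H (insert v (H.neighborFinset v)) := by
  have hK : H.IsClique ((insert v (H.neighborFinset v) : Finset V) : Set V) := by
    rw [Finset.coe_insert, coe_neighborFinset, isClique_insert]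
    exact ⟨hN, fun _ hb _ => hb⟩
  refine ⟨hK, fun K' hK' hsub => le_antisymm ?_ hsub⟩
  rw [← Finset.coe_subset, Finset.coe_insert, coe_neighborFinset]
  exact subset_insert_neighborSet_of_isClique hK' (hsub (Finset.mem_insert_self _ _))

lemma IsMaxClique.eq_of_mem_of_isClique_neighborSet {K L : Finset V} (hK : IsMaxClique H K)
    (hL : IsMaxClique H L) (hvK : v ∈ K) (hvL : v ∈ L) (hN : H.IsClique (H.neighborSet v)) :
    K = L := by
  classical
  have hKL : H.IsClique ((K ∪ L : Finset V) : Set V) := by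
    rw [Finset.coe_union]
    refine (isClique_insert.mpr ⟨hN, fun _ hb _ => hb⟩).subset (Set.union_subset ?_ ?_)
    exacts [subset_insert_neighborSet_of_isClique hK.1 hvK,
      subset_insert_neighborSet_of_isClique hL.1 hvL]
  exact (hK.2 _ hKL Finset.subset_union_left).symm.trans (hL.2 _ hKL Finset.subset_union_right)

end MaxClique

section Tree

variable {V : Type*} {H : SimpleGraph V}

/-- On a cycle, the vertex of largest rank has two distinct neighbours of no larger rank. -/
theorem SimpleGraph.isAcyclic_of_rank (r : V → ℕ)
    (h : ∀ ⦃v a b⦄, H.Adj v a → H.Adj v b → r a ≤ r v → r b ≤ r v → a = b) :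
    H.IsAcyclic := by
  classical
  intro v c hc
  obtain ⟨u, hu, hmax⟩ := c.support.toFinset.exists_max_image r ⟨v, by simp⟩
  rw [List.mem_toFinset] at hu
  have hc' := hc.rotate hu
  have hle : ∀ i, r ((c.rotate u hu).getVert i) ≤ r u := fun i =>
    hmax _ (List.mem_toFinset.mpr
      ((c.mem_support_rotate_iff u hu).mp ((c.rotate u hu).getVert_mem_support i)))
  exact hc'.snd_ne_penultimate (h (Walk.adj_snd hc'.not_nil)
    (Walk.adj_penultimate hc'.not_nil).symm (hle 1) (hle _))

lemma SimpleGraph.Walk.IsPath.exists_adj_adj_of_mem_support {u w : V} {p : H.Walk u w}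
    (hp : p.IsPath) {x : V} (hx : x ∈ p.support) (hxu : x ≠ u) (hxw : x ≠ w) :
    ∃ a b, a ≠ b ∧ H.Adj x a ∧ H.Adj x b := by
  induction p with
  | nil => simp_all
  | @cons u u' w huu' q ih =>
    rw [Walk.cons_isPath_iff] at hp
    have hxq : x ∈ q.support := by simpa [hxu] using hx
    by_cases hxu' : x = u'
    · subst hxu'
      have hq : ¬ q.Nil := Walk.not_nil_of_ne hxw
      refine ⟨u, q.snd, ?_, huu'.symm, q.adj_snd hq⟩
      rintro rfl
      exact hp.2 (q.getVert_mem_support 1)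
    · exact ih hp.1 hxq hxu' hxw

end Tree

/-- Two distinct maximal cliques meet inside `D`, and an inner node of a path has two distinct
neighbours on it. -/
theorem cliqueIntersectionProperty_of_subset {V : Type*} [DecidableEq V] {H : SimpleGraph V}
    {T : SimpleGraph {K : Finset V // IsMaxClique H K}} {D : Set V}
    (hunique : ∀ K K' : {K : Finset V // IsMaxClique H K}, ∀ v ∉ D, v ∈ K.1 → v ∈ K'.1 → K = K')
    (hinner : ∀ L A B, A ≠ B → T.Adj L A → T.Adj L B → D ⊆ L.1) :
    CliqueIntersectionProperty H T := by
  intro K K' p hp L hL v hv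
  rw [Finset.mem_inter] at hv
  by_cases hvD : v ∈ D
  · by_cases hLK : L = K
    · exact hLK ▸ hv.1
    by_cases hLK' : L = K'
    · exact hLK' ▸ hv.2
    obtain ⟨A, B, hAB, hA, hB⟩ := hp.exists_adj_adj_of_mem_support hL hLK hLK'
    exact hinner L A B hAB hA hB hvD
  · obtain rfl := hunique K K' v hvD hv.1 hv.2
    rw [Walk.eq_nil_iff_nil.mpr (Walk.isPath_iff_nil.mp hp), Walk.support_nil,
      List.mem_singleton] at hL
    exact hL ▸ hv.1

section Comb

def combGraph (n : ℕ) : SimpleGraph (Fin n ⊕ Fin n) :=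
  SimpleGraph.fromRel fun
    | .inl i, .inr j => i = j
    | .inr i, .inr j => (pathGraph n).Adj i j
    | _, _ => False

variable {n : ℕ}

@[simp]
lemma combGraph_adj_inl_inl {i j : Fin n} : ¬ (combGraph n).Adj (.inl i) (.inl j) := by
  simp [combGraph]

@[simp]
lemma combGraph_adj_inl_inr {i j : Fin n} : (combGraph n).Adj (.inl i) (.inr j) ↔ i = j := by
  simp [combGraph]

@[simp]
lemma combGraph_adj_inr_inl {i j : Fin n} : (combGraph n).Adj (.inr i) (.inl j) ↔ i = j := by
  simp [combGraph, eq_comm]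

@[simp]
lemma combGraph_adj_inr_inr {i j : Fin n} :
    (combGraph n).Adj (.inr i) (.inr j) ↔ (pathGraph n).Adj i j := by
  simp only [combGraph, fromRel_adj, ne_eq, Sum.inr.injEq, adj_comm, or_self]
  exact and_iff_right_of_imp Adj.ne

lemma combGraph_adj_inl {i : Fin n} {x : Fin n ⊕ Fin n} :
    (combGraph n).Adj (.inl i) x ↔ x = .inr i := by
  cases x <;> simp [eq_comm]

lemma combGraph_connected (hn : 0 < n) : (combGraph n).Connected := by
  have : Nonempty (Fin n ⊕ Fin n) := ⟨.inr ⟨0, hn⟩⟩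
  have spine (i j : Fin n) : (combGraph n).Reachable (.inr i) (.inr j) :=
    (pathGraph_preconnected n i j).map ⟨Sum.inr, combGraph_adj_inr_inr.mpr⟩
  have toSpine (x : Fin n ⊕ Fin n) : ∃ i, (combGraph n).Reachable x (.inr i) := by
    rcases x with i | i
    · exact ⟨i, (combGraph_adj_inl_inr.mpr rfl).reachable⟩
    · exact ⟨i, .refl _⟩
  refine ⟨fun x y => ?_⟩
  obtain ⟨i, hi⟩ := toSpine x
  obtain ⟨j, hj⟩ := toSpine y
  exact hi.trans ((spine i j).trans hj.symm)

/-- With this rank, the only neighbour of no larger rank is the preceding spine vertex. -/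
lemma combGraph_isAcyclic : (combGraph n).IsAcyclic :=
  isAcyclic_of_rank (Sum.elim (fun i => 2 * i.val + 2) (fun i => 2 * i.val + 1)) <| by
    rintro (v | v) (a | a) (b | b) <;> simp [pathGraph_adj, Fin.ext_iff] <;> omega

lemma combGraph_isTree (hn : 0 < n) : (combGraph n).IsTree :=
  ⟨combGraph_connected hn, combGraph_isAcyclic⟩

lemma pathGraph_ncard_neighborSet_le_two (i : Fin n) :
    ((pathGraph n).neighborSet i).ncard ≤ 2 :=
  calc ((pathGraph n).neighborSet i).ncard
      ≤ ({i.val - 1, i.val + 1} : Set ℕ).ncard :=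
        Set.ncard_le_ncard_of_injOn Fin.val
          (fun j hj => by simp [pathGraph_adj] at hj ⊢; omega) Fin.val_injective.injOn
    _ ≤ 2 := (Set.ncard_insert_le _ _).trans (by simp)

lemma combGraph_neighborSet_inr (i : Fin n) : (combGraph n).neighborSet (.inr i) =
    insert (.inl i) (Sum.inr '' (pathGraph n).neighborSet i) := by
  ext (j | j) <;> simp [eq_comm]

lemma combGraph_ncard_neighborSet_le_three (x : Fin n ⊕ Fin n) :
    ((combGraph n).neighborSet x).ncard ≤ 3 := by
  rcases x with i | i
  · have : (combGraph n).neighborSet (.inl i) = {.inr i} := by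
      ext; simp [combGraph_adj_inl]
    simp [this]
  · rw [combGraph_neighborSet_inr]
    refine (Set.ncard_insert_le _ _).trans ?_
    rw [Set.ncard_image_of_injective _ Sum.inr_injective]
    linarith [pathGraph_ncard_neighborSet_le_two i]

end Comb

namespace SVert

variable {p q : ℕ}

def equivSum : SVert p q ≃ Fin p ⊕ (Fin q ⊕ Fin q) where
  toFun
    | .d i => .inl i
    | .w j => .inr (.inl j)
    | .s j => .inr (.inr j)
  invFun := Sum.elim d (Sum.elim w s)
  left_inv v := by cases v <;> rfl
  right_inv x := by rcases x with i | j | j <;> rfl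

instance : Fintype (SVert p q) := Fintype.ofEquiv _ equivSum.symm

def ofWS : Fin q ⊕ Fin q → SVert p q := Sum.elim w s

lemma ofWS_injective : Function.Injective (ofWS : Fin q ⊕ Fin q → SVert p q) := by
  rintro (i | i) (j | j) h <;> simp_all [ofWS]

lemma not_isD_ofWS (x : Fin q ⊕ Fin q) : ¬ (ofWS x : SVert p q).isD := by
  rcases x with j | j <;> simp [ofWS, isD]

lemma exists_ofWS_of_not_isD {v : SVert p q} (hv : ¬ v.isD) : ∃ x, v = ofWS x := by
  rcases v with i | j | j
  · exact absurd trivial hv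
  · exact ⟨.inl j, rfl⟩
  · exact ⟨.inr j, rfl⟩

end SVert

section SplitRed

open SVert

variable {p q : ℕ} {G : SimpleGraph (Fin p ⊕ Fin q)}

lemma splitRed_adj_d_d {i j : Fin p} : (splitRed p q G).Adj (.d i) (.d j) ↔ i ≠ j := by
  simp [splitRed, eq_comm]

lemma splitRed_adj_s_of_isD {v : SVert p q} (hv : v.isD) (j : Fin q) :
    (splitRed p q G).Adj (.s j) v := by
  rcases v with i | _ | _ <;> simp_all [splitRed, isD]

lemma splitRed_not_adj_of_not_isD {a b : SVert p q} (ha : ¬ a.isD) (hb : ¬ b.isD) :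
    ¬ (splitRed p q G).Adj a b := by
  rcases a with _ | _ | _ <;> rcases b with _ | _ | _ <;> simp_all [splitRed, isD]

lemma splitRed_isClique_isD : (splitRed p q G).IsClique {v | v.isD} := by
  rintro (i | _ | _) hi (j | _ | _) hj hij <;> simp_all [isD, splitRed_adj_d_d]

lemma splitRed_isClique_neighborSet {v : SVert p q} (hv : ¬ v.isD) :
    (splitRed p q G).IsClique ((splitRed p q G).neighborSet v) :=
  splitRed_isClique_isD.subset fun _ hu =>
    by_contra fun hu' => splitRed_not_adj_of_not_isD hv hu' hu

/-- A special vertex extends any clique inside `D`. -/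
lemma IsMaxClique.exists_not_isD_of_splitRed (hq : 0 < q) {K : Finset (SVert p q)}
    (hK : IsMaxClique (splitRed p q G) K) : ∃ v ∈ K, ¬ v.isD := by
  by_contra! hD
  have hins : (splitRed p q G).IsClique ((insert (.s ⟨0, hq⟩) K : Finset _) : Set _) := by
    rw [Finset.coe_insert, isClique_insert]
    exact ⟨hK.1, fun b hb _ => splitRed_adj_s_of_isD (hD b hb) _⟩
  have hK' := hK.2 _ hins (Finset.subset_insert _ _)
  exact hD _ (hK' ▸ Finset.mem_insert_self _ _)

variable (G) in
noncomputable def maxCliqueOf (x : Fin q ⊕ Fin q) :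
    {K : Finset (SVert p q) // IsMaxClique (splitRed p q G) K} :=
  haveI := Classical.decRel (splitRed p q G).Adj
  ⟨insert (ofWS x) ((splitRed p q G).neighborFinset (ofWS x)),
    isMaxClique_insert_neighborFinset (splitRed_isClique_neighborSet (not_isD_ofWS x))⟩

lemma ofWS_mem_maxCliqueOf (x : Fin q ⊕ Fin q) : ofWS x ∈ (maxCliqueOf G x).1 :=
  Finset.mem_insert_self _ _

lemma mem_maxCliqueOf_inr_of_isD {v : SVert p q} (hv : v.isD) (j : Fin q) :
    v ∈ (maxCliqueOf G (.inr j)).1 := by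
  refine Finset.mem_insert_of_mem ?_
  rw [mem_neighborFinset]
  exact splitRed_adj_s_of_isD hv j

lemma maxCliqueOf_bijective (hq : 0 < q) : Function.Bijective (maxCliqueOf G) := by
  refine ⟨fun x y hxy => ?_, fun K => ?_⟩
  · by_contra hne
    have hx : ofWS x ∈ (maxCliqueOf G y).1 := hxy ▸ ofWS_mem_maxCliqueOf x
    exact splitRed_not_adj_of_not_isD (not_isD_ofWS x) (not_isD_ofWS y)
      ((maxCliqueOf G y).2.1 hx (ofWS_mem_maxCliqueOf y) (ofWS_injective.ne hne))
  · obtain ⟨v, hvK, hv⟩ := K.2.exists_not_isD_of_splitRed hq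
    obtain ⟨x, rfl⟩ := exists_ofWS_of_not_isD hv
    exact ⟨x, Subtype.ext <| (maxCliqueOf G x).2.eq_of_mem_of_isClique_neighborSet K.2
      (ofWS_mem_maxCliqueOf x) hvK (splitRed_isClique_neighborSet hv)⟩

end SplitRed

section CliqueTree

open SVert

variable {p q : ℕ}

noncomputable def maxCliqueEquiv (G : SimpleGraph (Fin p ⊕ Fin q)) (hq : 0 < q) :
    (Fin q ⊕ Fin q) ≃ {K : Finset (SVert p q) // IsMaxClique (splitRed p q G) K} :=
  Equiv.ofBijective _ (maxCliqueOf_bijective hq)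

noncomputable def splitRedCliqueTree (G : SimpleGraph (Fin p ⊕ Fin q)) (hq : 0 < q) :
    SimpleGraph {K : Finset (SVert p q) // IsMaxClique (splitRed p q G) K} :=
  (combGraph q).map (maxCliqueEquiv G hq).toEmbedding

variable {G : SimpleGraph (Fin p ⊕ Fin q)}

lemma splitRedCliqueTree_isTree (hq : 0 < q) : (splitRedCliqueTree G hq).IsTree :=
  (Iso.map _ _).isTree_iff.mp (combGraph_isTree hq)

lemma splitRedCliqueTree_ncard_neighborSet_le_three (hq : 0 < q) (K) :
    ((splitRedCliqueTree G hq).neighborSet K).ncard ≤ 3 := by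
  set E := maxCliqueEquiv G hq
  obtain ⟨x, rfl⟩ := E.surjective K
  rw [splitRedCliqueTree, show E x = E.toEmbedding x from rfl, neighborSet_map,
    Set.ncard_image_of_injective _ E.toEmbedding.injective]
  exact combGraph_ncard_neighborSet_le_three x

lemma cliqueIntersectionProperty_splitRedCliqueTree (hq : 0 < q) :
    CliqueIntersectionProperty (splitRed p q G) (splitRedCliqueTree G hq) := by
  refine cliqueIntersectionProperty_of_subset (D := {v | v.isD})
    (fun K K' v hv hK hK' => Subtype.ext <|
      K.2.eq_of_mem_of_isClique_neighborSet K'.2 hK hK' (splitRed_isClique_neighborSet hv))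
    fun L A B hAB hA hB v hv => ?_
  set E := maxCliqueEquiv G hq
  obtain ⟨x, rfl⟩ := E.surjective L
  obtain ⟨a, rfl⟩ := E.surjective A
  obtain ⟨b, rfl⟩ := E.surjective B
  have hA' := (Iso.map E (combGraph q)).map_adj_iff.mp hA
  have hB' := (Iso.map E (combGraph q)).map_adj_iff.mp hB
  rcases x with j | j
  · rw [combGraph_adj_inl] at hA' hB'
    exact absurd (congrArg E (hA'.trans hB'.symm)) hAB
  · exact mem_maxCliqueOf_inr_of_isD hv j

end CliqueTree

theorem splitReduction_chordal_cliqueTree_degree_le_three_general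
    (p q : ℕ) (hq : 1 ≤ q) (G : SimpleGraph (Fin p ⊕ Fin q)) :
    (splitRed p q G).IsClique {v : SVert p q | v.isD} ∧
    (∀ a b : SVert p q, ¬ a.isD → ¬ b.isD → ¬ (splitRed p q G).Adj a b) ∧
    Chordal (splitRed p q G) ∧
    ∃ T : SimpleGraph {K : Finset (SVert p q) // IsMaxClique (splitRed p q G) K},
      T.IsTree ∧ CliqueIntersectionProperty (splitRed p q G) T ∧
      ∀ K, (T.neighborSet K).ncard ≤ 3 :=
  ⟨splitRed_isClique_isD, fun _ _ => splitRed_not_adj_of_not_isD,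
    chordal_of_isClique_of_isIndepSet_compl splitRed_isClique_isD
      fun _ ha _ hb _ => splitRed_not_adj_of_not_isD ha hb,
    splitRedCliqueTree G hq, splitRedCliqueTree_isTree hq,
    cliqueIntersectionProperty_splitRedCliqueTree hq,
    splitRedCliqueTree_ncard_neighborSet_le_three hq⟩

theorem splitReduction_chordal_cliqueTree_degree_le_three
    (p q : ℕ) (hp : 1 ≤ p) (hq : 1 ≤ q) (G : SimpleGraph (Fin p ⊕ Fin q))
    (hC : ∀ i j : Fin p, i ≠ j → G.Adj (Sum.inl i) (Sum.inl j))
    (hU : ∀ i j : Fin q, ¬ G.Adj (Sum.inr i) (Sum.inr j)) :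
    (splitRed p q G).IsClique {v : SVert p q | v.isD} ∧
    (∀ a b : SVert p q, ¬ a.isD → ¬ b.isD → ¬ (splitRed p q G).Adj a b) ∧
    Chordal (splitRed p q G) ∧
    ∃ T : SimpleGraph {K : Finset (SVert p q) // IsMaxClique (splitRed p q G) K},
      T.IsTree ∧ CliqueIntersectionProperty (splitRed p q G) T ∧
      ∀ K, (T.neighborSet K).ncard ≤ 3 :=
  splitReduction_chordal_cliqueTree_degree_le_three_general p q hq G
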